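/- arXiv:2603.30039 — 2 statements merged into one kernel-verified Lean document; each statement's English description precedes it below -/
import Mathlib

section
/- Let F(C) := 4φ(C)² − λ*(4Φ(−C) − 1). For every C ∈ [0, 1/2], the second derivative of F at C equals −4λ*Cφ(C) + 8φ(C)²(2C² − 1), and this quantity is at most −0.49. Consequently F(C) ≤ F(C*) − 0.245·(C − C*)² for all C ∈ [0, 1/2]. -/
open MeasureTheory Real

/-- The standard Gaussian density `φ(x) = (1/√(2π)) e^{-x²/2}`. -/
noncomputable def gphi (x : ℝ) : ℝ := (Real.sqrt (2 * Real.pi))⁻¹ * Real.exp (-(x ^ 2) / 2)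

/-- The standard Gaussian CDF `Φ(x) = ∫_{-∞}^x φ(t) dt`. -/
noncomputable def gPhi (x : ℝ) : ℝ := ∫ t in Set.Iic x, gphi t

/-- The standard Gaussian measure on `ℝ^{n+1}`. -/
noncomputable def gauss (n : ℕ) : Measure (Fin (n + 1) → ℝ) :=
  Measure.pi fun _ => ProbabilityTheory.gaussianReal 0 1

/-- The multivariate probabilists' Hermite polynomial `He_α(x) = ∏ᵢ He_{αᵢ}(xᵢ)`. -/
noncomputable def hermiteProd {m : ℕ} (α : Fin m → ℕ) (x : Fin m → ℝ) : ℝ :=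
  ∏ i, Polynomial.aeval (x i) (Polynomial.hermite (α i))

/-- The factorial of a multi-index, `α! = ∏ᵢ αᵢ!`. -/
def mfact {m : ℕ} (α : Fin m → ℕ) : ℕ := ∏ i, Nat.factorial (α i)

/-- A Davie–Reeds strip pair in direction `x₁`, up to a `γ`-null set. -/
def StripPair (n : ℕ) (Cstar : ℝ) (f g : (Fin (n + 1) → ℝ) → ℝ) : Prop :=
  ∀ᵐ x ∂(gauss n),
    (Cstar ≤ x 0 → f x = 1 ∧ g x = 1) ∧
    (x 0 ≤ -Cstar → f x = -1 ∧ g x = -1) ∧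
    (|x 0| < Cstar → g x = -f x)

lemma gphi_pos (x : ℝ) : 0 < gphi x := by
  unfold gphi; positivity

lemma gphi_even (x : ℝ) : gphi (-x) = gphi x := by unfold gphi; ring_nf

lemma gphi_cont : Continuous gphi := by
  unfold gphi
  exact continuous_const.mul (Real.continuous_exp.comp (by continuity))

lemma gphi_integrable : Integrable gphi := by
  have h : gphi = fun x => (Real.sqrt (2 * Real.pi))⁻¹ * Real.exp (-(1/2 : ℝ) * x ^ 2) := by
    funext x; unfold gphi; congr 1; ring_nf
  rw [h]
  exact (integrable_exp_neg_mul_sq (by norm_num : (0:ℝ) < 1/2)).const_mul _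

lemma gphi_integral : ∫ x, gphi x = 1 := by
  have h : gphi = fun x => (Real.sqrt (2 * Real.pi))⁻¹ * Real.exp (-(1/2 : ℝ) * x ^ 2) := by
    funext x; unfold gphi; congr 1; ring_nf
  rw [h, integral_const_mul, integral_gaussian]
  rw [show Real.pi / (1/2) = 2 * Real.pi by ring]
  rw [inv_mul_cancel₀ (by positivity)]

lemma hasDerivAt_gphi (x : ℝ) : HasDerivAt gphi (-x * gphi x) x := by
  have h1 : HasDerivAt (fun y : ℝ => -(y ^ 2) / 2) (-x) x := by
    have := ((hasDerivAt_pow 2 x).neg.div_const 2)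
    convert this using 1; any_goals rfl
    push_cast; ring
  have h2 := (h1.exp).const_mul (Real.sqrt (2 * Real.pi))⁻¹
  convert h2 using 1
  any_goals rfl
  unfold gphi; ring

lemma gPhi_sub (a b : ℝ) : gPhi b - gPhi a = ∫ t in a..b, gphi t := by
  exact intervalIntegral.integral_Iic_sub_Iic gphi_integrable.integrableOn gphi_integrable.integrableOn

lemma hasDerivAt_gPhi (x : ℝ) : HasDerivAt gPhi (gphi x) x := by
  have h : ∀ y, gPhi y = gPhi 0 + ∫ t in (0:ℝ)..y, gphi t := by
    intro y; rw [← gPhi_sub 0 y]; ring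
  have hd : HasDerivAt (fun y => gPhi 0 + ∫ t in (0:ℝ)..y, gphi t) (gphi x) x := by
    have := intervalIntegral.integral_hasDerivAt_right
      (gphi_integrable.intervalIntegrable)
      (gphi_cont.stronglyMeasurableAtFilter _ _)
      gphi_cont.continuousAt (a := 0) (b := x)
    simpa using this
  exact (funext h) ▸ hd

lemma gPhi_neg (C : ℝ) : gPhi (-C) = 1 - gPhi C := by
  have h1 : gPhi (-C) = ∫ x in Set.Ioi C, gphi x := by
    unfold gPhi
    have : (∫ t in Set.Iic (-C), gphi t) = ∫ t in Set.Iic (-C), gphi (-t) := by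
      congr 1; funext t; rw [gphi_even]
    rw [this, integral_comp_neg_Iic, neg_neg]
  have h2 : gPhi C + ∫ x in Set.Ioi C, gphi x = 1 := by
    rw [← gphi_integral]
    exact intervalIntegral.integral_Iic_add_Ioi gphi_integrable.integrableOn gphi_integrable.integrableOn
  linarith

lemma gPhi_zero : gPhi 0 = 1/2 := by
  have := gPhi_neg 0
  rw [neg_zero] at this; linarith

lemma gphi_anti {x y : ℝ} (hx : 0 ≤ x) (hxy : x ≤ y) : gphi y ≤ gphi x := by
  unfold gphi
  have : y ^ 2 ≥ x ^ 2 := by nlinarith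
  have := Real.exp_le_exp.mpr (show -(y^2)/2 ≤ -(x^2)/2 by linarith)
  have hs : (0:ℝ) < (Real.sqrt (2 * Real.pi))⁻¹ := by positivity
  nlinarith

lemma sqrt_two_pi_le : Real.sqrt (2 * Real.pi) ≤ 2.5067 := by
  rw [show (2.5067 : ℝ) = Real.sqrt (2.5067^2) by rw [Real.sqrt_sq]; norm_num]
  apply Real.sqrt_le_sqrt
  nlinarith [Real.pi_lt_d6]

lemma two_pi_le : 2 * Real.pi ≤ 6.2832 := by nlinarith [Real.pi_lt_d6]

lemma exp_quarter_le : Real.exp (1/4) ≤ 1.2985 := by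
  have h4 : Real.exp (1/4) ^ 4 = Real.exp 1 := by
    rw [← Real.exp_nat_mul]; norm_num
  have he := Real.exp_one_lt_d9
  have hp : 0 < Real.exp (1/4) := Real.exp_pos _
  nlinarith [sq_nonneg (Real.exp (1/4) - 1.2985), sq_nonneg (Real.exp (1/4) ^ 2 - 1.2985 ^ 2), sq_nonneg (Real.exp (1/4) + 1.2985)]

lemma exp_neg_one_ge : (0.3678 : ℝ) ≤ Real.exp (-1) := by
  rw [Real.exp_neg]
  have he := Real.exp_one_lt_d9
  have : (0:ℝ) < Real.exp 1 := Real.exp_pos 1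
  rw [le_inv_comm₀ (by norm_num) this]
  linarith

lemma integral_gphi_lb {C : ℝ} (hC : 0 ≤ C) :
    (Real.sqrt (2 * Real.pi))⁻¹ * (C - C^3/6) ≤ ∫ t in (0:ℝ)..C, gphi t := by
  have hmono : ∫ t in (0:ℝ)..C, (Real.sqrt (2 * Real.pi))⁻¹ * (1 - t^2/2) ≤ ∫ t in (0:ℝ)..C, gphi t := by
    apply intervalIntegral.integral_mono_on hC
    · apply IntervalIntegrable.const_mul
      apply Continuous.intervalIntegrable; continuity
    · exact gphi_integrable.intervalIntegrable
    · intro t _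
      unfold gphi
      have h := Real.add_one_le_exp (-(t^2)/2)
      have hs : (0:ℝ) < (Real.sqrt (2 * Real.pi))⁻¹ := by positivity
      nlinarith
  have hval : ∫ t in (0:ℝ)..C, (Real.sqrt (2 * Real.pi))⁻¹ * (1 - t^2/2)
      = (Real.sqrt (2 * Real.pi))⁻¹ * (C - C^3/6) := by
    rw [intervalIntegral.integral_const_mul]
    congr 1
    rw [intervalIntegral.integral_sub intervalIntegrable_const (by apply Continuous.intervalIntegrable; continuity)]
    have h2 : ∫ t in (0:ℝ)..C, t^2/2 = (∫ t in (0:ℝ)..C, t^2)/2 := by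
      rw [intervalIntegral.integral_div]
    rw [h2, integral_pow]
    simp; ring
  linarith [hval ▸ hmono]

lemma Cstar_le_half {Cstar : ℝ} (hCstar : Cstar ∈ Set.Ioo (0 : ℝ) 1)
    (hroot : 4 * gphi Cstar ^ 2 - 4 * gPhi (-Cstar) + 1 = 0) : Cstar ≤ 1/2 := by
  by_contra hcon
  push_neg at hcon
  set t := Cstar with ht
  obtain ⟨ht0, ht1⟩ := hCstar
  set p := (Real.sqrt (2 * Real.pi))⁻¹ with hpdef
  have hp : 0 < p := by positivity
  have hp2 : p ^ 2 = (2 * Real.pi)⁻¹ := by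
    rw [hpdef, inv_pow, Real.sq_sqrt (by positivity)]
  have hp2' : (1:ℝ)/6.2832 ≤ p ^ 2 := by
    rw [hp2, le_inv_comm₀ (by norm_num) (by positivity)]
    calc 2 * Real.pi ≤ 6.2832 := two_pi_le
    _ ≤ (1/6.2832)⁻¹ := by norm_num
  have hp1 : (1:ℝ)/2.5067 ≤ p := by
    rw [hpdef, le_inv_comm₀ (by norm_num) (by positivity)]
    calc Real.sqrt (2*Real.pi) ≤ 2.5067 := sqrt_two_pi_le
    _ ≤ (1/2.5067)⁻¹ := by norm_num
  -- key inequality from the root equation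
  have hkey : 4 * gphi t ^ 2 ≤ 1 - 4 * (p * (t - t^3/6)) := by
    rw [gPhi_neg] at hroot
    have hPhit : gPhi t = 1/2 + ∫ s in (0:ℝ)..t, gphi s := by
      have := gPhi_sub 0 t
      rw [gPhi_zero] at this; linarith
    have hlb := integral_gphi_lb (le_of_lt ht0)
    rw [hPhit] at hroot
    nlinarith [hlb]
  have hsq : gphi t ^ 2 = p ^ 2 * Real.exp (-(t^2)) := by
    unfold gphi
    rw [mul_pow, ← hpdef, pow_two (Real.exp _), ← Real.exp_add]
    congr 2; ring
  rcases le_total t 0.52 with hA | hB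
  · -- 1/2 < t ≤ 0.52
    have h1 : (0.7296:ℝ) ≤ Real.exp (-(t^2)) := by
      have := Real.add_one_le_exp (-(t^2)); nlinarith
    have h2 : (23:ℝ)/48 ≤ t - t^3/6 := by
      nlinarith [mul_nonneg (by linarith : (0:ℝ) ≤ t - 1/2)
        (by nlinarith : (0:ℝ) ≤ 1 - (t^2 + t/2 + 1/4)/6)]
    have e1 : (1/6.2832 : ℝ) * 0.7296 ≤ p^2 * Real.exp (-(t^2)) :=
      mul_le_mul hp2' h1 (by norm_num) (sq_nonneg p)
    have e2 : (1/2.5067 : ℝ) * (23/48) ≤ p * (t - t^3/6) := by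
      apply mul_le_mul hp1 h2 (by norm_num) (le_of_lt hp)
    rw [hsq] at hkey
    linarith
  · -- 0.52 ≤ t < 1
    have he : Real.exp (-1) ≤ Real.exp (-(t^2)) := by
      apply Real.exp_le_exp.mpr; nlinarith
    have h1 : (0.3678:ℝ) ≤ Real.exp (-(t^2)) := le_trans exp_neg_one_ge he
    have h2 : (0.49656:ℝ) ≤ t - t^3/6 := by
      nlinarith [mul_nonneg (by linarith : (0:ℝ) ≤ t - 0.52)
        (by nlinarith : (0:ℝ) ≤ 1 - (t^2 + 0.52*t + 0.2704)/6)]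
    have e1 : (1/6.2832 : ℝ) * 0.3678 ≤ p^2 * Real.exp (-(t^2)) :=
      mul_le_mul hp2' h1 (by norm_num) (sq_nonneg p)
    have e2 : (1/2.5067 : ℝ) * 0.49656 ≤ p * (t - t^3/6) := by
      apply mul_le_mul hp1 h2 (by norm_num) (le_of_lt hp)
    rw [hsq] at hkey
    linarith

/-- On `[0, 1/2]`, the second derivative of `F` equals `−4λ*Cφ(C) + 8φ(C)²(2C² − 1)` and is
at most `−0.49`; consequently `F(C) ≤ F(C*) − 0.245 (C − C*)²` on `[0, 1/2]`. -/
theorem F_second_derivative_bound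
    (Cstar : ℝ) (hCstar : Cstar ∈ Set.Ioo (0 : ℝ) 1)
    (hroot : 4 * gphi Cstar ^ 2 - 4 * gPhi (-Cstar) + 1 = 0)
    (lam : ℝ) (hlam : lam = 2 * Cstar * gphi Cstar)
    (F : ℝ → ℝ) (hF : ∀ C, F C = 4 * gphi C ^ 2 - lam * (4 * gPhi (-C) - 1)) :
    (∀ C ∈ Set.Icc (0 : ℝ) (1 / 2),
        deriv (deriv F) C = -4 * lam * C * gphi C + 8 * gphi C ^ 2 * (2 * C ^ 2 - 1) ∧
        deriv (deriv F) C ≤ -0.49) ∧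
    (∀ C ∈ Set.Icc (0 : ℝ) (1 / 2), F C ≤ F Cstar - 0.245 * (C - Cstar) ^ 2) := by
  have hFeq : F = fun C => 4 * gphi C ^ 2 - lam * (4 * gPhi (-C) - 1) := funext hF
  set F1 : ℝ → ℝ := fun C => (-8) * (C * gphi C ^ 2) + (4 * lam) * gphi C with hF1def
  set D2 : ℝ → ℝ := fun C => -4 * lam * C * gphi C + 8 * gphi C ^ 2 * (2 * C ^ 2 - 1) with hD2def
  -- first derivative
  have hd1 : ∀ C, HasDerivAt F (F1 C) C := by
    intro C
    rw [hFeq]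
    have hg2 : HasDerivAt (fun x : ℝ => gphi x ^ 2)
        ((2 : ℕ) * gphi C ^ (2 - 1) * (-C * gphi C)) C := (hasDerivAt_gphi C).pow 2
    have hP : HasDerivAt (fun x : ℝ => gPhi (-x)) (gphi (-C) * (-1)) C :=
      HasDerivAt.comp C (hasDerivAt_gPhi (-C)) (hasDerivAt_neg C)
    have h := (hg2.const_mul (4:ℝ)).sub (((hP.const_mul (4:ℝ)).sub_const 1).const_mul lam)
    convert h using 1
    any_goals rfl
    rw [gphi_even]
    push_cast
    simp [hF1def]
    ring
  have hderF : deriv F = F1 := funext fun C => (hd1 C).deriv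
  -- second derivative
  have hd2 : ∀ C, HasDerivAt F1 (D2 C) C := by
    intro C
    have hg2 : HasDerivAt (fun x : ℝ => gphi x ^ 2)
        ((2 : ℕ) * gphi C ^ (2 - 1) * (-C * gphi C)) C := (hasDerivAt_gphi C).pow 2
    have h1 := ((hasDerivAt_id C).mul hg2).const_mul (-8 : ℝ)
    have h2 := (hasDerivAt_gphi C).const_mul (4 * lam)
    have h := h1.add h2
    convert h using 1
    any_goals rfl
    push_cast
    simp [hD2def]
    ring
  have hderiv2 : ∀ C, deriv (deriv F) C = D2 C := by
    intro C
    rw [hderF]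
    exact (hd2 C).deriv
  -- the numeric bound on D2
  have hlam0 : 0 ≤ lam := by
    rw [hlam]
    have := gphi_pos Cstar
    nlinarith [hCstar.1]
  have hbound : ∀ C ∈ Set.Icc (0 : ℝ) (1/2), D2 C ≤ -0.49 := by
    intro C hC
    obtain ⟨hC0, hC12⟩ := hC
    have hg12 : gphi (1/2) ≤ gphi C := gphi_anti hC0 hC12
    have hgpos := gphi_pos C
    have hgpos12 := gphi_pos (1/2)
    have hterm1 : -4 * lam * C * gphi C ≤ 0 := by
      have := mul_nonneg (mul_nonneg hlam0 hC0) hgpos.le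
      linarith
    have hterm2 : 8 * gphi C ^ 2 * (2 * C ^ 2 - 1) ≤ -4 * gphi (1/2) ^ 2 := by
      have h2C : 2 * C ^ 2 - 1 ≤ -(1/2) := by nlinarith
      nlinarith [sq_nonneg (gphi C - gphi (1/2))]
    have hval : gphi (1/2) ^ 2 = (2 * Real.pi)⁻¹ * Real.exp (-(1/4)) := by
      unfold gphi
      rw [mul_pow, inv_pow, Real.sq_sqrt (by positivity), pow_two (Real.exp _), ← Real.exp_add]
      norm_num
    have q1 : (1/6.283186 : ℝ) ≤ (2 * Real.pi)⁻¹ := by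
      rw [le_inv_comm₀ (by norm_num) (by positivity)]
      nlinarith [Real.pi_lt_d6]
    have q2 : (1/1.2985 : ℝ) ≤ Real.exp (-(1/4)) := by
      rw [Real.exp_neg, le_inv_comm₀ (by norm_num) (Real.exp_pos _)]
      calc Real.exp (1/4) ≤ 1.2985 := exp_quarter_le
      _ ≤ (1/1.2985)⁻¹ := by norm_num
    have hq : (1/6.283186 : ℝ) * (1/1.2985) ≤ gphi (1/2) ^ 2 := by
      rw [hval]
      exact mul_le_mul q1 q2 (by norm_num) (by positivity)
    have : (0.1225 : ℝ) ≤ gphi (1/2) ^ 2 := le_trans (by norm_num) hq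
    simp only [hD2def]
    nlinarith
  have hCle : Cstar ≤ 1/2 := Cstar_le_half hCstar hroot
  have hCstarIcc : Cstar ∈ Set.Icc (0:ℝ) (1/2) := ⟨hCstar.1.le, hCle⟩
  refine ⟨fun C hC => ⟨hderiv2 C, (hderiv2 C) ▸ hbound C hC⟩, ?_⟩
  -- quadratic bound
  set g : ℝ → ℝ := fun x => F Cstar - 0.245 * (x - Cstar) ^ 2 - F x with hgdef
  set g1 : ℝ → ℝ := fun x => -0.49 * (x - Cstar) - F1 x with hg1def
  have hdg : ∀ x, HasDerivAt g (g1 x) x := by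
    intro x
    have hsq : HasDerivAt (fun y : ℝ => (y - Cstar) ^ 2)
        ((2 : ℕ) * (x - Cstar) ^ (2 - 1) * 1) x := ((hasDerivAt_id x).sub_const Cstar).pow 2
    have h := ((hasDerivAt_const x (F Cstar)).sub (hsq.const_mul (0.245 : ℝ))).sub (hd1 x)
    convert h using 1
    any_goals rfl
    push_cast
    simp [hg1def]
    ring
  have hderg : deriv g = g1 := funext fun x => (hdg x).deriv
  have hdg1 : ∀ x, HasDerivAt g1 (-0.49 - D2 x) x := by
    intro x
    have h := (((hasDerivAt_id x).sub_const Cstar).const_mul (-0.49 : ℝ)).sub (hd2 x)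
    convert h using 1
    any_goals rfl
    simp only [hD2def, hF1def]
    ring
  have hderg1 : deriv g1 = fun x => -0.49 - D2 x := funext fun x => (hdg1 x).deriv
  have hg1diff : Differentiable ℝ g1 := fun x => (hdg1 x).differentiableAt
  have hgdiff : Differentiable ℝ g := fun x => (hdg x).differentiableAt
  have hg1Cstar : g1 Cstar = 0 := by
    simp only [hg1def, hF1def, hlam]
    ring
  have hmono : MonotoneOn g1 (Set.Icc (0:ℝ) (1/2)) := by
    apply monotoneOn_of_deriv_nonneg (convex_Icc 0 (1/2)) hg1diff.continuous.continuousOn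
      hg1diff.differentiableOn
    intro x hx
    rw [interior_Icc] at hx
    rw [hderg1]
    have := hbound x ⟨hx.1.le, hx.2.le⟩
    simp only []
    linarith
  intro C hC
  obtain ⟨hC0, hC12⟩ := hC
  have hgC : 0 ≤ g C := by
    rcases le_total C Cstar with hle | hge
    · -- C ≤ Cstar : g antitone on [C, Cstar]
      have hanti : AntitoneOn g (Set.Icc C Cstar) := by
        apply antitoneOn_of_deriv_nonpos (convex_Icc C Cstar) hgdiff.continuous.continuousOn
          hgdiff.differentiableOn
        intro x hx
        rw [interior_Icc] at hx
        rw [hderg]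
        have hxmem : x ∈ Set.Icc (0:ℝ) (1/2) := ⟨le_trans hC0 hx.1.le, le_trans hx.2.le hCle⟩
        have := hmono hxmem hCstarIcc hx.2.le
        rw [hg1Cstar] at this
        linarith
      have := hanti (Set.left_mem_Icc.mpr hle) (Set.right_mem_Icc.mpr hle) hle
      have hgCstar : g Cstar = 0 := by simp [hgdef]
      linarith
    · -- Cstar ≤ C : g monotone on [Cstar, C]
      have hmon : MonotoneOn g (Set.Icc Cstar C) := by
        apply monotoneOn_of_deriv_nonneg (convex_Icc Cstar C) hgdiff.continuous.continuousOn
          hgdiff.differentiableOn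
        intro x hx
        rw [interior_Icc] at hx
        rw [hderg]
        have hxmem : x ∈ Set.Icc (0:ℝ) (1/2) := ⟨le_trans hCstar.1.le hx.1.le, le_trans hx.2.le hC12⟩
        have := hmono hCstarIcc hxmem hx.1.le
        rw [hg1Cstar] at this
        linarith
      have := hmon (Set.left_mem_Icc.mpr hge) (Set.right_mem_Icc.mpr hge) hge
      have hgCstar : g Cstar = 0 := by simp [hgdef]
      linarith
  simp only [hgdef] at hgC
  linarith
end

section
/- For every fixed k ≥ 1, the quantity E_{X ∼ γ⁽ⁿ⁾}[ ( (1/binom(n,k))·Σ_{S ⊆ {1,…,n}, |S| = k} ∏_{i ∈ S} Xᵢ² − 1 )² ] tends to 0 as n → ∞. In particular, for Ψ(x) := binom(n,k)^{−1/2}·Σ_{|S|=k} (∏_{i∈S} xᵢ)·e_S (with orthonormal vectors e_S), one has E_{X ∼ γ⁽ⁿ⁾}(‖Ψ(X)‖ − 1)² → 0 as n → ∞. -/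
open MeasureTheory

section Aux
open MeasureTheory Real ProbabilityTheory Finset
open scoped ENNReal NNReal

open MeasureTheory Real
open scoped ENNReal NNReal

lemma integrable_pow_mul_gauss (n : ℕ) :
    Integrable (fun x : ℝ => x ^ n * rexp (-(1/2) * x ^ 2)) := by
  have h : Integrable (fun x : ℝ => rexp (-(1/4) * x ^ 2)) :=
    integrable_exp_neg_mul_sq (by norm_num)
  refine (h.const_mul ((n.factorial : ℝ) * rexp 1)).mono' ?_ (Filter.Eventually.of_forall fun x => ?_)
  · exact (Continuous.mul (continuous_pow n) (by continuity)).aestronglyMeasurable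
  · have h1 : |x| ^ n ≤ n.factorial * rexp |x| := by
      have := Real.pow_div_factorial_le_exp (x := |x|) (abs_nonneg x) n
      have hf : (0:ℝ) < n.factorial := by exact_mod_cast n.factorial_pos
      calc |x| ^ n = (|x| ^ n / n.factorial) * n.factorial := by field_simp
        _ ≤ rexp |x| * n.factorial := by
            apply mul_le_mul_of_nonneg_right this hf.le
        _ = n.factorial * rexp |x| := by ring
    have h2 : rexp (|x|) * rexp (-(1/2) * x ^ 2) ≤ rexp 1 * rexp (-(1/4) * x ^ 2) := by
      rw [← Real.exp_add, ← Real.exp_add]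
      apply Real.exp_le_exp.2
      nlinarith [sq_nonneg (|x| - 2), sq_abs x]
    have h3 : (0:ℝ) < rexp (-(1/2) * x ^ 2) := Real.exp_pos _
    rw [norm_mul, norm_pow, Real.norm_eq_abs, Real.norm_eq_abs,
      abs_of_pos h3]
    calc |x| ^ n * rexp (-(1/2) * x ^ 2) ≤ (n.factorial * rexp |x|) * rexp (-(1/2) * x ^ 2) :=
          mul_le_mul_of_nonneg_right h1 h3.le
      _ = n.factorial * (rexp |x| * rexp (-(1/2) * x ^ 2)) := by ring
      _ ≤ n.factorial * (rexp 1 * rexp (-(1/4) * x ^ 2)) := by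
          apply mul_le_mul_of_nonneg_left h2 (by positivity)
      _ = (n.factorial : ℝ) * rexp 1 * rexp (-(1/4) * x ^ 2) := by ring

lemma gauss_step (m : ℕ) :
    ∫ x : ℝ, x ^ (m + 2) * rexp (-(1/2) * x ^ 2)
      = (m + 1 : ℝ) * ∫ x : ℝ, x ^ m * rexp (-(1/2) * x ^ 2) := by
  have hu : ∀ x : ℝ, HasDerivAt (fun y : ℝ => y ^ (m + 1)) ((m + 1 : ℝ) * x ^ m) x := by
    intro x
    simpa using hasDerivAt_pow (m + 1) x
  have hv : ∀ x : ℝ, HasDerivAt (fun y : ℝ => rexp (-(1/2) * y ^ 2))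
      (-x * rexp (-(1/2) * x ^ 2)) x := by
    intro x
    have := ((hasDerivAt_pow 2 x).const_mul (-(1/2 : ℝ))).exp
    convert this using 1
    ring
  have huv' : Integrable ((fun x : ℝ => x ^ (m+1)) * fun x => -x * rexp (-(1/2) * x ^ 2)) := by
    have := (integrable_pow_mul_gauss (m + 2)).neg
    convert this using 1
    funext x; simp [Pi.mul_apply]; ring
  have hu'v : Integrable ((fun x : ℝ => (m + 1 : ℝ) * x ^ m) * fun x => rexp (-(1/2) * x ^ 2)) := by
    have := (integrable_pow_mul_gauss m).const_mul (m + 1 : ℝ)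
    convert this using 1
    funext x; simp [Pi.mul_apply]; ring
  have huv : Integrable ((fun x : ℝ => x ^ (m+1)) * fun x => rexp (-(1/2) * x ^ 2)) := by
    have := integrable_pow_mul_gauss (m + 1)
    convert this using 1
    rfl
  have h := integral_mul_deriv_eq_deriv_mul_of_integrable (fun x _ => hu x) (fun x _ => hv x) huv' hu'v huv
  have e1 : ∫ x : ℝ, x ^ (m+1) * (-x * rexp (-(1/2) * x ^ 2))
      = -∫ x : ℝ, x ^ (m + 2) * rexp (-(1/2) * x ^ 2) := by
    rw [← integral_neg]; congr 1; funext x; ring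
  have e2 : ∫ x : ℝ, (m + 1 : ℝ) * x ^ m * rexp (-(1/2) * x ^ 2)
      = (m + 1 : ℝ) * ∫ x : ℝ, x ^ m * rexp (-(1/2) * x ^ 2) := by
    rw [← integral_const_mul]; congr 1; funext x; ring
  rw [e1, e2] at h
  linarith [h]

lemma gauss_J0 : ∫ x : ℝ, rexp (-(1/2) * x ^ 2) = Real.sqrt (2 * π) := by
  rw [integral_gaussian, show π / (1/2:ℝ) = 2 * π by ring]

open ProbabilityTheory in
lemma gaussianReal_eq_withDensity :
    gaussianReal 0 1 = volume.withDensity fun x => ((gaussianPDFReal 0 1 x).toNNReal : ℝ≥0∞) := by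
  rw [gaussianReal_of_var_ne_zero 0 one_ne_zero]
  rfl

open ProbabilityTheory in
lemma gaussianPDFReal_zero_one (x : ℝ) :
    gaussianPDFReal 0 1 x = (Real.sqrt (2 * π))⁻¹ * rexp (-(1/2) * x ^ 2) := by
  simp only [gaussianPDFReal, NNReal.coe_one, mul_one, sub_zero]
  rw [show -x ^ 2 / 2 = -(1/2) * x ^ 2 by ring]

open ProbabilityTheory in
lemma integral_pow_gaussianReal (n : ℕ) :
    ∫ x, x ^ n ∂(gaussianReal 0 1)
      = (Real.sqrt (2 * π))⁻¹ * ∫ x : ℝ, x ^ n * rexp (-(1/2) * x ^ 2) := by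
  rw [gaussianReal_eq_withDensity,
    integral_withDensity_eq_integral_smul ((measurable_gaussianPDFReal 0 1).real_toNNReal)]
  rw [← integral_const_mul]
  congr 1
  funext x
  rw [NNReal.smul_def, Real.coe_toNNReal _ (gaussianPDFReal_nonneg 0 1 x),
    gaussianPDFReal_zero_one, smul_eq_mul]
  ring

open ProbabilityTheory in
lemma integrable_pow_gaussianReal (n : ℕ) :
    Integrable (fun x : ℝ => x ^ n) (gaussianReal 0 1) := by
  rw [gaussianReal_eq_withDensity,
    integrable_withDensity_iff ((measurable_gaussianPDFReal 0 1).real_toNNReal).coe_nnreal_ennreal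
      (Filter.Eventually.of_forall fun x => ENNReal.coe_lt_top)]
  have h := (integrable_pow_mul_gauss n).const_mul (Real.sqrt (2 * π))⁻¹
  apply h.congr
  filter_upwards with x
  rw [ENNReal.coe_toReal, Real.coe_toNNReal _ (gaussianPDFReal_nonneg 0 1 x),
    gaussianPDFReal_zero_one]
  ring

lemma gauss_J2 : ∫ x : ℝ, x ^ 2 * rexp (-(1/2) * x ^ 2) = Real.sqrt (2 * π) := by
  have h := gauss_step 0
  simp only [zero_add, pow_zero, one_mul, Nat.cast_zero] at h
  rw [h, gauss_J0]

lemma gauss_J4 : ∫ x : ℝ, x ^ 4 * rexp (-(1/2) * x ^ 2) = 3 * Real.sqrt (2 * π) := by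
  have h := gauss_step 2
  rw [gauss_J2, show (2 + 2 : ℕ) = 4 from rfl] at h
  rw [h]
  norm_num

open ProbabilityTheory in
lemma integral_sq_gaussianReal : ∫ x, x ^ 2 ∂(gaussianReal 0 1) = 1 := by
  rw [integral_pow_gaussianReal, gauss_J2, inv_mul_cancel₀ (by positivity)]

open ProbabilityTheory in
lemma integral_pow4_gaussianReal : ∫ x, x ^ 4 ∂(gaussianReal 0 1) = 3 := by
  rw [integral_pow_gaussianReal, gauss_J4]
  rw [show (Real.sqrt (2 * π))⁻¹ * (3 * Real.sqrt (2 * π)) = 3 * ((Real.sqrt (2*π))⁻¹ * Real.sqrt (2*π)) by ring,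
    inv_mul_cancel₀ (by positivity), mul_one]

lemma integrable_prod_pow (n : ℕ) (e : Fin n → ℕ) :
    Integrable (fun x : Fin n → ℝ => ∏ i, (x i) ^ (e i))
      (Measure.pi fun _ : Fin n => gaussianReal 0 1) := by
  letI : MeasureSpace ℝ := ⟨gaussianReal 0 1⟩
  haveI : SigmaFinite (volume : Measure ℝ) := (inferInstanceAs (SigmaFinite (gaussianReal 0 1)))
  exact Integrable.fintype_prod (f := fun i (t : ℝ) => t ^ (e i))
    fun i => integrable_pow_gaussianReal (e i)

lemma integral_prod_pow (n : ℕ) (e : Fin n → ℕ) :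
    ∫ x : Fin n → ℝ, ∏ i, (x i) ^ (e i) ∂(Measure.pi fun _ : Fin n => gaussianReal 0 1)
      = ∏ i, ∫ t : ℝ, t ^ (e i) ∂(gaussianReal 0 1) := by
  letI : MeasureSpace ℝ := ⟨gaussianReal 0 1⟩
  haveI : SigmaFinite (volume : Measure ℝ) := (inferInstanceAs (SigmaFinite (gaussianReal 0 1)))
  exact integral_fintype_prod_eq_prod (fun i (t : ℝ) => t ^ (e i))

lemma prod_sq_eq (n : ℕ) (U : Finset (Fin n)) (x : Fin n → ℝ) :
    ∏ i ∈ U, (x i) ^ 2 = ∏ i, (x i) ^ (2 * if i ∈ U then 1 else 0) := by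
  rw [show (∏ i, (x i) ^ (2 * if i ∈ U then 1 else 0))
      = ∏ i, (if i ∈ U then (x i) ^ 2 else 1) from
    Finset.prod_congr rfl fun i _ => by split_ifs <;> simp]
  rw [Finset.prod_ite_mem, Finset.univ_inter]

lemma PP_eq (n : ℕ) (S T : Finset (Fin n)) (x : Fin n → ℝ) :
    (∏ i ∈ S, (x i) ^ 2) * (∏ i ∈ T, (x i) ^ 2)
      = ∏ i, (x i) ^ (2 * ((if i ∈ S then 1 else 0) + (if i ∈ T then 1 else 0))) := by
  rw [prod_sq_eq n S, prod_sq_eq n T, ← Finset.prod_mul_distrib]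
  exact Finset.prod_congr rfl fun i _ => by rw [← pow_add]; ring_nf

lemma integrable_PP (n : ℕ) (S T : Finset (Fin n)) :
    Integrable (fun x : Fin n → ℝ => (∏ i ∈ S, (x i) ^ 2) * (∏ i ∈ T, (x i) ^ 2))
      (Measure.pi fun _ : Fin n => gaussianReal 0 1) := by
  have h := integrable_prod_pow n
    (fun i => 2 * ((if i ∈ S then 1 else 0) + (if i ∈ T then 1 else 0)))
  exact h.congr (Filter.Eventually.of_forall fun x => (PP_eq n S T x).symm)

lemma integral_PP (n : ℕ) (S T : Finset (Fin n)) :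
    ∫ x : Fin n → ℝ, (∏ i ∈ S, (x i) ^ 2) * (∏ i ∈ T, (x i) ^ 2)
        ∂(Measure.pi fun _ : Fin n => gaussianReal 0 1)
      = 3 ^ (S ∩ T).card := by
  rw [show (fun x : Fin n → ℝ => (∏ i ∈ S, (x i) ^ 2) * (∏ i ∈ T, (x i) ^ 2))
      = fun x => ∏ i, (x i) ^ (2 * ((if i ∈ S then 1 else 0) + (if i ∈ T then 1 else 0))) from
    funext fun x => PP_eq n S T x]
  rw [integral_prod_pow]
  rw [show (∏ i, ∫ t : ℝ, t ^ (2 * ((if i ∈ S then 1 else 0) + (if i ∈ T then 1 else 0)))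
        ∂(gaussianReal 0 1))
      = ∏ i, (if i ∈ S ∩ T then (3:ℝ) else 1) from
    Finset.prod_congr rfl fun i _ => by
      by_cases hS : i ∈ S <;> by_cases hT : i ∈ T
      · simp only [hS, hT, Finset.mem_inter, and_self, if_true]
        rw [show 2 * ((1:ℕ) + 1) = 4 from rfl]
        exact integral_pow4_gaussianReal
      · simp only [hS, hT, Finset.mem_inter, and_false, if_true, if_false]
        rw [show 2 * ((1:ℕ) + 0) = 2 from rfl]
        exact integral_sq_gaussianReal
      · simp only [hS, hT, Finset.mem_inter, false_and, if_true, if_false]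
        rw [show 2 * ((0:ℕ) + 1) = 2 from rfl]
        exact integral_sq_gaussianReal
      · simp only [hS, hT, Finset.mem_inter, false_and, if_false]
        rw [show 2 * ((0:ℕ) + 0) = 0 from rfl]
        simp]
  rw [Finset.prod_ite_mem, Finset.univ_inter, Finset.prod_const]

lemma integrable_P (n : ℕ) (S : Finset (Fin n)) :
    Integrable (fun x : Fin n → ℝ => ∏ i ∈ S, (x i) ^ 2)
      (Measure.pi fun _ : Fin n => gaussianReal 0 1) := by
  have h := integrable_PP n S ∅
  simpa using h

lemma integral_P (n : ℕ) (S : Finset (Fin n)) :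
    ∫ x : Fin n → ℝ, ∏ i ∈ S, (x i) ^ 2
        ∂(Measure.pi fun _ : Fin n => gaussianReal 0 1) = 1 := by
  have h := integral_PP n S ∅
  simpa using h

lemma count_mem_le (n k : ℕ) (i : Fin n) :
    ((Finset.powersetCard k (Finset.univ : Finset (Fin n))).filter fun T => i ∈ T).card
      ≤ (n - 1).choose (k - 1) := by
  have h : ((Finset.powersetCard k (Finset.univ : Finset (Fin n))).filter fun T => i ∈ T).card
      ≤ (Finset.powersetCard (k - 1) ((Finset.univ : Finset (Fin n)).erase i)).card := by
    apply Finset.card_le_card_of_injOn (fun T => T.erase i)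
    · intro T hT
      rw [Finset.mem_coe, Finset.mem_filter, Finset.mem_powersetCard] at hT
      rw [Finset.mem_coe, Finset.mem_powersetCard]
      exact ⟨Finset.erase_subset_erase i (Finset.subset_univ T),
        by rw [Finset.card_erase_of_mem hT.2, hT.1.2]⟩
    · intro T1 h1 T2 h2 he
      simp only [Finset.coe_filter, Set.mem_setOf_eq] at h1 h2
      simp only at he
      rw [← Finset.insert_erase h1.2, he, Finset.insert_erase h2.2]
  calc _ ≤ _ := h
    _ = (n - 1).choose (k - 1) := by
        rw [Finset.card_powersetCard, Finset.card_erase_of_mem (Finset.mem_univ i),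
          Finset.card_univ, Fintype.card_fin]

lemma sum_inter_card_le (n k : ℕ) (S : Finset (Fin n)) (hS : S.card = k) :
    ∑ T ∈ Finset.powersetCard k (Finset.univ : Finset (Fin n)), (S ∩ T).card
      ≤ k * (n - 1).choose (k - 1) := by
  have h1 : ∀ T : Finset (Fin n), (S ∩ T).card = ∑ i ∈ S, if i ∈ T then 1 else 0 := by
    intro T
    rw [Finset.sum_ite_mem, Finset.card_eq_sum_ones]
  calc ∑ T ∈ Finset.powersetCard k (Finset.univ : Finset (Fin n)), (S ∩ T).card
      = ∑ i ∈ S, ∑ T ∈ Finset.powersetCard k (Finset.univ : Finset (Fin n)),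
          (if i ∈ T then 1 else 0) := by
        simp_rw [h1]; exact Finset.sum_comm
    _ = ∑ i ∈ S, ((Finset.powersetCard k (Finset.univ : Finset (Fin n))).filter
          fun T => i ∈ T).card := by
        refine Finset.sum_congr rfl fun i _ => ?_
        rw [← Finset.sum_filter, Finset.card_eq_sum_ones]
    _ ≤ ∑ _i ∈ S, (n - 1).choose (k - 1) :=
        Finset.sum_le_sum fun i _ => count_mem_le n k i
    _ = k * (n - 1).choose (k - 1) := by rw [Finset.sum_const, hS, smul_eq_mul]

lemma choose_id {n k : ℕ} (hk : 1 ≤ k) (hkn : k ≤ n) :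
    k * n.choose k = n * (n - 1).choose (k - 1) := by
  obtain ⟨a, rfl⟩ : ∃ a, n = a + 1 := ⟨n - 1, by omega⟩
  obtain ⟨b, rfl⟩ : ∃ b, k = b + 1 := ⟨k - 1, by omega⟩
  simp only [Nat.add_sub_cancel]
  rw [mul_comm, Nat.add_one_mul_choose_eq, mul_comm]

lemma pow3_bound {j k : ℕ} (hjk : j ≤ k) : (3:ℝ) ^ j - 1 ≤ ((3:ℝ) ^ k - 1) * j := by
  rcases Nat.eq_zero_or_pos j with h | h
  · simp [h]
  · have h3 : (3:ℝ) ^ j ≤ 3 ^ k := pow_le_pow_right₀ (by norm_num) hjk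
    have hj1 : (1:ℝ) ≤ (j:ℝ) := by exact_mod_cast h
    have hk1 : (1:ℝ) ≤ (3:ℝ) ^ k := one_le_pow₀ (by norm_num)
    nlinarith

section Main
variable (k n : ℕ)

-- the integrand of the first integral
noncomputable def Yfun (k n : ℕ) (x : Fin n → ℝ) : ℝ :=
  ((n.choose k : ℝ))⁻¹ *
    (∑ S ∈ Finset.powersetCard k (Finset.univ : Finset (Fin n)), ∏ i ∈ S, (x i) ^ 2)

lemma g_integrable (S T : Finset (Fin n)) :
    Integrable (fun x : Fin n → ℝ =>
        ((∏ i ∈ S, (x i) ^ 2) - 1) * ((∏ i ∈ T, (x i) ^ 2) - 1))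
      (Measure.pi fun _ : Fin n => gaussianReal 0 1) := by
  have h := (((integrable_PP n S T).sub (integrable_P n S)).sub
    ((integrable_P n T).sub (integrable_const 1)))
  exact h.congr (Filter.Eventually.of_forall fun x => by simp; ring)

lemma g_integral (S T : Finset (Fin n)) :
    ∫ x : Fin n → ℝ, ((∏ i ∈ S, (x i) ^ 2) - 1) * ((∏ i ∈ T, (x i) ^ 2) - 1)
        ∂(Measure.pi fun _ : Fin n => gaussianReal 0 1)
      = 3 ^ (S ∩ T).card - 1 := by
  have e : (fun x : Fin n → ℝ =>
      ((∏ i ∈ S, (x i) ^ 2) - 1) * ((∏ i ∈ T, (x i) ^ 2) - 1))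
      = fun x => ((∏ i ∈ S, (x i) ^ 2) * (∏ i ∈ T, (x i) ^ 2) - (∏ i ∈ S, (x i) ^ 2))
          - ((∏ i ∈ T, (x i) ^ 2) - 1) := by
    funext x; ring
  have h1 : Integrable (fun x : Fin n → ℝ =>
      (∏ i ∈ S, (x i) ^ 2) * (∏ i ∈ T, (x i) ^ 2) - (∏ i ∈ S, (x i) ^ 2))
      (Measure.pi fun _ : Fin n => gaussianReal 0 1) :=
    (integrable_PP n S T).sub (integrable_P n S)
  have h2 : Integrable (fun x : Fin n → ℝ => (∏ i ∈ T, (x i) ^ 2) - 1)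
      (Measure.pi fun _ : Fin n => gaussianReal 0 1) :=
    (integrable_P n T).sub (integrable_const 1)
  rw [e, integral_sub h1 h2,
    integral_sub (integrable_PP n S T) (integrable_P n S),
    integral_sub (integrable_P n T) (integrable_const 1),
    integral_PP, integral_P, integral_P, integral_const]
  simp

lemma Y_pointwise (hkn : k ≤ n) (x : Fin n → ℝ) :
    (Yfun k n x - 1) ^ 2
      = ((n.choose k : ℝ))⁻¹ * ((n.choose k : ℝ))⁻¹ *
          ∑ S ∈ Finset.powersetCard k (Finset.univ : Finset (Fin n)),
            ∑ T ∈ Finset.powersetCard k (Finset.univ : Finset (Fin n)),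
              ((∏ i ∈ S, (x i) ^ 2) - 1) * ((∏ i ∈ T, (x i) ^ 2) - 1) := by
  have hc : ((n.choose k : ℝ)) ≠ 0 := Nat.cast_ne_zero.2 (Nat.choose_pos hkn).ne'
  have hcA : ((Finset.powersetCard k (Finset.univ : Finset (Fin n))).card : ℝ)
      = (n.choose k : ℝ) := by
    rw [Finset.card_powersetCard, Finset.card_univ, Fintype.card_fin]
  have h0 : Yfun k n x - 1
      = ((n.choose k : ℝ))⁻¹ *
          ∑ S ∈ Finset.powersetCard k (Finset.univ : Finset (Fin n)),
            ((∏ i ∈ S, (x i) ^ 2) - 1) := by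
    rw [Finset.sum_sub_distrib, Finset.sum_const, nsmul_eq_mul, mul_one, hcA, mul_sub,
      inv_mul_cancel₀ hc, Yfun]
  rw [h0, mul_pow, pow_two, pow_two, Finset.sum_mul_sum]

lemma V_eq (hkn : k ≤ n) :
    ∫ x : Fin n → ℝ, (Yfun k n x - 1) ^ 2 ∂(Measure.pi fun _ : Fin n => gaussianReal 0 1)
      = ((n.choose k : ℝ))⁻¹ * ((n.choose k : ℝ))⁻¹ *
          ∑ S ∈ Finset.powersetCard k (Finset.univ : Finset (Fin n)),
            ∑ T ∈ Finset.powersetCard k (Finset.univ : Finset (Fin n)),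
              ((3:ℝ) ^ (S ∩ T).card - 1) := by
  rw [show (fun x : Fin n → ℝ => (Yfun k n x - 1) ^ 2)
      = fun x => ((n.choose k : ℝ))⁻¹ * ((n.choose k : ℝ))⁻¹ *
          ∑ S ∈ Finset.powersetCard k (Finset.univ : Finset (Fin n)),
            ∑ T ∈ Finset.powersetCard k (Finset.univ : Finset (Fin n)),
              ((∏ i ∈ S, (x i) ^ 2) - 1) * ((∏ i ∈ T, (x i) ^ 2) - 1) from
    funext fun x => Y_pointwise k n hkn x]
  rw [integral_const_mul, integral_finset_sum _ fun S _ =>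
    integrable_finset_sum _ fun T _ => g_integrable n S T]
  congr 1
  refine Finset.sum_congr rfl fun S _ => ?_
  rw [integral_finset_sum _ fun T _ => g_integrable n S T]
  exact Finset.sum_congr rfl fun T _ => g_integral n S T

lemma V_integrable (hkn : k ≤ n) :
    Integrable (fun x : Fin n → ℝ => (Yfun k n x - 1) ^ 2)
      (Measure.pi fun _ : Fin n => gaussianReal 0 1) := by
  have h : Integrable (fun x : Fin n → ℝ =>
      ∑ S ∈ Finset.powersetCard k (Finset.univ : Finset (Fin n)),
        ∑ T ∈ Finset.powersetCard k (Finset.univ : Finset (Fin n)),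
          ((∏ i ∈ S, (x i) ^ 2) - 1) * ((∏ i ∈ T, (x i) ^ 2) - 1))
      (Measure.pi fun _ : Fin n => gaussianReal 0 1) :=
    integrable_finset_sum _ fun S _ => integrable_finset_sum _ fun T _ => g_integrable n S T
  exact (h.const_mul _).congr
    (Filter.Eventually.of_forall fun x => (Y_pointwise k n hkn x).symm)

lemma V_bound (hk : 1 ≤ k) (hkn : k ≤ n) :
    ∫ x : Fin n → ℝ, (Yfun k n x - 1) ^ 2 ∂(Measure.pi fun _ : Fin n => gaussianReal 0 1)
      ≤ ((3:ℝ) ^ k - 1) * k ^ 2 / n := by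
  have hc : (0:ℝ) < (n.choose k : ℝ) := by exact_mod_cast Nat.choose_pos hkn
  have hn : (0:ℝ) < (n:ℝ) := by exact_mod_cast Nat.lt_of_lt_of_le (by omega) hkn
  have h3k : (0:ℝ) ≤ (3:ℝ) ^ k - 1 := by
    have : (1:ℝ) ≤ 3 ^ k := one_le_pow₀ (by norm_num)
    linarith
  rw [V_eq k n hkn]
  have hsum : ∑ S ∈ Finset.powersetCard k (Finset.univ : Finset (Fin n)),
      ∑ T ∈ Finset.powersetCard k (Finset.univ : Finset (Fin n)),
        ((3:ℝ) ^ (S ∩ T).card - 1)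
      ≤ (n.choose k : ℝ) * (((3:ℝ)^k - 1) * (k * ((n-1).choose (k-1) : ℕ))) := by
    have hA : ((Finset.powersetCard k (Finset.univ : Finset (Fin n))).card : ℝ)
        = (n.choose k : ℝ) := by
      rw [Finset.card_powersetCard, Finset.card_univ, Fintype.card_fin]
    calc _ ≤ ∑ _S ∈ Finset.powersetCard k (Finset.univ : Finset (Fin n)),
          (((3:ℝ)^k - 1) * (k * ((n-1).choose (k-1) : ℕ))) := by
          refine Finset.sum_le_sum fun S hS => ?_
          have hScard : S.card = k := (Finset.mem_powersetCard.1 hS).2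
          calc ∑ T ∈ Finset.powersetCard k (Finset.univ : Finset (Fin n)),
              ((3:ℝ) ^ (S ∩ T).card - 1)
              ≤ ∑ T ∈ Finset.powersetCard k (Finset.univ : Finset (Fin n)),
                  ((3:ℝ)^k - 1) * ((S ∩ T).card : ℝ) := by
                refine Finset.sum_le_sum fun T _ => pow3_bound ?_
                rw [← hScard]
                exact Finset.card_le_card Finset.inter_subset_left
            _ = ((3:ℝ)^k - 1) * ∑ T ∈ Finset.powersetCard k (Finset.univ : Finset (Fin n)),
                  ((S ∩ T).card : ℝ) := by rw [Finset.mul_sum]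
            _ ≤ ((3:ℝ)^k - 1) * (k * ((n-1).choose (k-1) : ℕ)) := by
                refine mul_le_mul_of_nonneg_left ?_ h3k
                rw [← Nat.cast_sum]
                exact_mod_cast sum_inter_card_le n k S hScard
      _ = _ := by rw [Finset.sum_const, nsmul_eq_mul, hA]
  calc _ ≤ ((n.choose k : ℝ))⁻¹ * ((n.choose k : ℝ))⁻¹ *
        ((n.choose k : ℝ) * (((3:ℝ)^k - 1) * (k * ((n-1).choose (k-1) : ℕ)))) :=
        mul_le_mul_of_nonneg_left hsum (by positivity)
    _ = ((3:ℝ) ^ k - 1) * k ^ 2 / n := by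
        have hid : (k:ℝ) * (n.choose k : ℝ) = (n:ℝ) * ((n-1).choose (k-1) : ℕ) := by
          exact_mod_cast choose_id hk hkn
        field_simp
        linear_combination (-((3:ℝ) ^ k - 1)) * hid
end Main

lemma Yfun_nonneg (k n : ℕ) (x : Fin n → ℝ) : 0 ≤ Yfun k n x :=
  mul_nonneg (inv_nonneg.2 (Nat.cast_nonneg _))
    (Finset.sum_nonneg fun S _ => Finset.prod_nonneg fun i _ => sq_nonneg _)

lemma sqrt_sq_le (k n : ℕ) (x : Fin n → ℝ) :
    (Real.sqrt (Yfun k n x) - 1) ^ 2 ≤ (Yfun k n x - 1) ^ 2 := by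
  have hy := Yfun_nonneg k n x
  nlinarith [Real.sq_sqrt hy, Real.sqrt_nonneg (Yfun k n x),
    sq_nonneg (Real.sqrt (Yfun k n x) - 1),
    sq_nonneg (Real.sqrt (Yfun k n x) * (Real.sqrt (Yfun k n x) - 1))]


end Aux

/-- For fixed `k ≥ 1`, the variance-type quantity
`E[((1/binom(n,k)) Σ_{|S|=k} ∏_{i∈S} Xᵢ² − 1)²]` tends to `0` as `n → ∞`; in particular the
`L²` distance of `‖Ψ(X)‖` from `1` tends to `0`. -/
theorem elementary_symmetric_concentration (k : ℕ) (hk : 1 ≤ k) :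
    Filter.Tendsto (fun n : ℕ =>
        ∫ x : Fin n → ℝ,
          (((n.choose k : ℝ))⁻¹ *
              (∑ S ∈ Finset.powersetCard k (Finset.univ : Finset (Fin n)),
                ∏ i ∈ S, (x i) ^ 2) - 1) ^ 2
          ∂(Measure.pi fun _ : Fin n => ProbabilityTheory.gaussianReal 0 1))
      Filter.atTop (nhds 0) ∧
    Filter.Tendsto (fun n : ℕ =>
        ∫ x : Fin n → ℝ,
          (Real.sqrt (((n.choose k : ℝ))⁻¹ *
              (∑ S ∈ Finset.powersetCard k (Finset.univ : Finset (Fin n)),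
                ∏ i ∈ S, (x i) ^ 2)) - 1) ^ 2
          ∂(Measure.pi fun _ : Fin n => ProbabilityTheory.gaussianReal 0 1))
      Filter.atTop (nhds 0) := by
  have hlim : Filter.Tendsto (fun n : ℕ => ((3:ℝ) ^ k - 1) * k ^ 2 / n)
      Filter.atTop (nhds 0) := tendsto_const_div_atTop_nhds_zero_nat _
  constructor
  · refine squeeze_zero' (Filter.Eventually.of_forall fun n =>
      integral_nonneg fun x => sq_nonneg _) ?_ hlim
    filter_upwards [Filter.eventually_ge_atTop k] with n hkn
    exact V_bound k n hk hkn
  · refine squeeze_zero' (Filter.Eventually.of_forall fun n =>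
      integral_nonneg fun x => sq_nonneg _) ?_ hlim
    filter_upwards [Filter.eventually_ge_atTop k] with n hkn
    refine le_trans ?_ (V_bound k n hk hkn)
    refine integral_mono_of_nonneg (Filter.Eventually.of_forall fun x => sq_nonneg _)
      (V_integrable k n hkn) (Filter.Eventually.of_forall fun x => sqrt_sq_le k n x)
end
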